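/- Let N ≥ 1 and let T : ℝ^N → ℝ^{N×N} be a continuously differentiable matrix-valued map which is symmetric (T_{ij} = T_{ji}) and satisfies Σ_{k=1}^N (∂T_{kj}/∂V_i (V) − ∂T_{ki}/∂V_j (V)) V_k = 0 for all V ∈ ℝ^N and all i, j. Define W : ℝ^N → ℝ by W(x) = ∫₀¹ Σ_{i,j=1}^N T_{ij}(λx) λ x_i x_j dλ. Then W is differentiable and ∂W/∂x_k (x) = Σ_{i=1}^N T_{ki}(x) x_i for every x ∈ ℝ^N and every k. -/

import Mathlib

/-!
Differentiating under the integral sign, `∂ₖW(x) = ∫₀¹ ∂ₖg(x, λ) dλ` with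
`g(x, λ) = λ ∑ᵢⱼ Tᵢⱼ(λx) xᵢ xⱼ`. Symmetry of `T` and the weak closure condition at `V = λx`
turn `∂ₖg(x, λ)` into the `λ`-derivative of `λ² ∑ᵢ Tₖᵢ(λx) xᵢ`, so by the fundamental theorem
of calculus `∂ₖW(x) = ∑ᵢ Tₖᵢ(x) xᵢ`.
-/

open Set Metric MeasureTheory

section ParametricIntegral

variable {E P F : Type*} [NormedAddCommGroup E] [NormedSpace ℝ E] [NormedAddCommGroup P]
  [NormedSpace ℝ P] [NormedAddCommGroup F] [NormedSpace ℝ F] {G : E → P → F}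

theorem differentiable_left_of_contDiff_uncurry (hG : ContDiff ℝ 1 (Function.uncurry G)) (p : P) :
    Differentiable ℝ (G · p) :=
  (hG.differentiable one_ne_zero).comp (differentiable_id.prodMk (differentiable_const p))

theorem continuous_fderiv_left_of_contDiff_uncurry (hG : ContDiff ℝ 1 (Function.uncurry G)) :
    Continuous fun q : E × P => fderiv ℝ (G · q.2) q.1 := by
  have hpartial (q : E × P) :
      fderiv ℝ (G · q.2) q.1 = (fderiv ℝ (Function.uncurry G) q).comp (.inl ℝ E P) :=
    ((hG.differentiable one_ne_zero q).hasFDerivAt.comp (f := fun e => (e, q.2)) q.1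
      (hasFDerivAt_prodMk_left q.1 q.2)).fderiv
  simp_rw [hpartial]
  exact (hG.continuous_fderiv one_ne_zero).clm_comp continuous_const

theorem hasFDerivAt_intervalIntegral_of_contDiff_uncurry [ProperSpace E] [CompleteSpace F]
    {G : E → ℝ → F} (hG : ContDiff ℝ 1 (Function.uncurry G)) (a b : ℝ) (x : E) :
    HasFDerivAt (fun y => ∫ l in a..b, G y l) (∫ l in a..b, fderiv ℝ (G · l) x) x := by
  have hG'_cont := continuous_fderiv_left_of_contDiff_uncurry hG
  have hG_cont (y : E) : Continuous (G y) :=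
    hG.continuous.comp (continuous_const.prodMk continuous_id)
  obtain ⟨C, hC⟩ := ((isCompact_closedBall x 1).prod isCompact_uIcc).exists_bound_of_continuousOn
    hG'_cont.continuousOn
  exact intervalIntegral.hasFDerivAt_integral_of_dominated_of_fderiv_le (μ := volume)
    (bound := fun _ => C) (ball_mem_nhds x one_pos)
    (.of_forall fun y => (hG_cont y).aestronglyMeasurable) ((hG_cont x).intervalIntegrable a b)
    (hG'_cont.comp (continuous_const.prodMk continuous_id)).aestronglyMeasurable
    (.of_forall fun t ht y hy => hC (y, t) ⟨ball_subset_closedBall hy, uIoc_subset_uIcc ht⟩)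
    intervalIntegrable_const
    (.of_forall fun t _ y _ => (differentiable_left_of_contDiff_uncurry hG t y).hasFDerivAt)

end ParametricIntegral

theorem ContinuousLinearMap.apply_eq_sum_apply_single {n : Type*} [Fintype n] [DecidableEq n]
    (D : (n → ℝ) →L[ℝ] ℝ) (V : n → ℝ) : D V = ∑ j, D (Pi.single j 1) * V j := by
  conv_lhs => rw [← Finset.univ_sum_single V]
  refine (map_sum D _ _).trans (Finset.sum_congr rfl fun j _ => ?_)
  rw [mul_comm, ← smul_eq_mul, ← map_smul, ← Pi.single_smul, smul_eq_mul, mul_one]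

theorem sum_sum_mul_single_add_mul_single {n : Type*} [Fintype n] [DecidableEq n]
    {A : n → n → ℝ} (hA : ∀ i j, A i j = A j i) (x : n → ℝ) (k : n) :
    ∑ i, ∑ j, A i j * ((Pi.single k 1 : n → ℝ) i * x j + x i * (Pi.single k 1 : n → ℝ) j)
      = 2 * ∑ j, A k j * x j := by
  simp only [mul_add, Finset.sum_add_distrib, Pi.single_apply, mul_ite, ite_mul, mul_one, one_mul,
    mul_zero, zero_mul, Finset.sum_ite_eq', Finset.mem_univ, if_true]
  rw [Finset.sum_comm]
  simp only [Finset.sum_ite_eq', Finset.mem_univ, if_true, hA _ k]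
  ring

section Radial

variable {N : ℕ} {T : (Fin N → ℝ) → Fin N → Fin N → ℝ}

def WeakClosureAt (T : (Fin N → ℝ) → Fin N → Fin N → ℝ) (V : Fin N → ℝ) : Prop :=
  ∀ i j, ∑ k, (fderiv ℝ (fun W => T W k j) V (Pi.single i 1)
    - fderiv ℝ (fun W => T W k i) V (Pi.single j 1)) * V k = 0

def radialIntegrand (T : (Fin N → ℝ) → Fin N → Fin N → ℝ) (x : Fin N → ℝ) (l : ℝ) : ℝ :=
  ∑ i, ∑ j, T (l • x) i j * l * x i * x j

def radialFlux (T : (Fin N → ℝ) → Fin N → Fin N → ℝ) (x : Fin N → ℝ) (k : Fin N) (l : ℝ) : ℝ :=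
  l ^ 2 * ∑ i, T (l • x) k i * x i

theorem sum_sum_fderiv_single_mul_mul_of_weakClosureAt (hTsymm : ∀ V i j, T V i j = T V j i)
    {V : Fin N → ℝ} (hV : WeakClosureAt T V) (k : Fin N) :
    ∑ i, ∑ j, fderiv ℝ (fun W => T W i j) V (Pi.single k 1) * V i * V j
      = ∑ i, fderiv ℝ (fun W => T W k i) V V * V i := by
  have hclosed (j : Fin N) : ∑ i, fderiv ℝ (fun W => T W i j) V (Pi.single k 1) * V i
      = ∑ i, fderiv ℝ (fun W => T W k i) V (Pi.single j 1) * V i := by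
    simpa only [sub_mul, Finset.sum_sub_distrib, sub_eq_zero, hTsymm _ _ k] using hV k j
  calc ∑ i, ∑ j, fderiv ℝ (fun W => T W i j) V (Pi.single k 1) * V i * V j
      = ∑ j, (∑ i, fderiv ℝ (fun W => T W i j) V (Pi.single k 1) * V i) * V j := by
        rw [Finset.sum_comm]; simp only [Finset.sum_mul]
    _ = ∑ j, (∑ i, fderiv ℝ (fun W => T W k i) V (Pi.single j 1) * V i) * V j := by
        simp only [hclosed]
    _ = ∑ i, fderiv ℝ (fun W => T W k i) V V * V i := by
        simp only [ContinuousLinearMap.apply_eq_sum_apply_single _ V, Finset.sum_mul]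
        rw [Finset.sum_comm]
        exact Finset.sum_congr rfl fun i _ => Finset.sum_congr rfl fun j _ => by ring

theorem differentiable_radialIntegrand (hT : ∀ i j, Differentiable ℝ fun V => T V i j) (l : ℝ) :
    Differentiable ℝ (radialIntegrand T · l) := by
  unfold radialIntegrand
  fun_prop

theorem contDiff_uncurry_radialIntegrand (hT : ∀ i j, ContDiff ℝ 1 fun V => T V i j) :
    ContDiff ℝ 1 (Function.uncurry (radialIntegrand T)) := by
  unfold radialIntegrand Function.uncurry
  fun_prop

theorem contDiff_radialFlux (hT : ∀ i j, ContDiff ℝ 1 fun V => T V i j) (x : Fin N → ℝ)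
    (k : Fin N) : ContDiff ℝ 1 (radialFlux T x k) := by
  unfold radialFlux
  fun_prop

theorem hasLineDerivAt_radialIntegrand (hT : ∀ i j, Differentiable ℝ fun V => T V i j)
    (x v : Fin N → ℝ) (l : ℝ) :
    HasLineDerivAt ℝ (radialIntegrand T · l)
      (∑ i, ∑ j, (fderiv ℝ (fun V => T V i j) (l • x) v * l * l * x i * x j
        + T (l • x) i j * l * (v i * x j + x i * v j))) x v := by
  have hline : HasDerivAt (fun t : ℝ => x + t • v) v 0 := by
    simpa using ((hasDerivAt_id (0 : ℝ)).smul_const v).const_add x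
  have hcoord (m : Fin N) : HasDerivAt (fun t : ℝ => (x + t • v) m) (v m) 0 := by
    simpa using ((hasDerivAt_id (0 : ℝ)).mul_const (v m)).const_add (x m)
  unfold HasLineDerivAt radialIntegrand
  refine HasDerivAt.fun_sum fun i _ => HasDerivAt.fun_sum fun j _ => ?_
  have hT_line : HasDerivAt (fun t : ℝ => T (l • (x + t • v)) i j)
      (fderiv ℝ (fun V => T V i j) (l • x) (l • v)) 0 := by
    have hfd : HasFDerivAt (fun V => T V i j) (fderiv ℝ (fun V => T V i j) (l • x))
        (l • (x + (0 : ℝ) • v)) := by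
      rw [zero_smul, add_zero]
      exact (hT i j _).hasFDerivAt
    exact hfd.comp_hasDerivAt (f := fun t : ℝ => l • (x + t • v)) 0 (hline.const_smul l)
  refine (((hT_line.mul_const l).fun_mul (hcoord i)).fun_mul (hcoord j)).congr_deriv ?_
  simp only [map_smul, smul_eq_mul, zero_smul, add_zero]
  ring

theorem hasDerivAt_radialFlux (hT : ∀ i j, Differentiable ℝ fun V => T V i j)
    (x : Fin N → ℝ) (k : Fin N) (l : ℝ) :
    HasDerivAt (radialFlux T x k)
      (2 * l * ∑ i, T (l • x) k i * x i
        + l ^ 2 * ∑ i, fderiv ℝ (fun V => T V k i) (l • x) x * x i) l := by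
  have hray : HasDerivAt (fun l : ℝ => l • x) x l := by
    simpa using (hasDerivAt_id l).smul_const x
  have hT_ray (i : Fin N) : HasDerivAt (fun l : ℝ => T (l • x) k i)
      (fderiv ℝ (fun V => T V k i) (l • x) x) l :=
    (hT k i (l • x)).hasFDerivAt.comp_hasDerivAt (f := fun l : ℝ => l • x) l hray
  refine ((hasDerivAt_pow 2 l).fun_mul
    (HasDerivAt.fun_sum fun i _ => (hT_ray i).mul_const (x i))).congr_deriv ?_
  norm_num

theorem fderiv_radialIntegrand_single (hT : ∀ i j, Differentiable ℝ fun V => T V i j)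
    (hTsymm : ∀ V i j, T V i j = T V j i) (x : Fin N → ℝ) (l : ℝ)
    (hweak : WeakClosureAt T (l • x)) (k : Fin N) :
    fderiv ℝ (radialIntegrand T · l) x (Pi.single k 1) = deriv (radialFlux T x k) l := by
  rw [← (differentiable_radialIntegrand hT l x).lineDeriv_eq_fderiv,
    (hasLineDerivAt_radialIntegrand hT x _ l).lineDeriv, (hasDerivAt_radialFlux hT x k l).deriv]
  have hclosed := sum_sum_fderiv_single_mul_mul_of_weakClosureAt hTsymm hweak k
  simp only [Pi.smul_apply, smul_eq_mul, map_smul] at hclosed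
  have hfirst : ∑ i, ∑ j, fderiv ℝ (fun V => T V i j) (l • x) (Pi.single k 1) * l * l * x i * x j
      = l ^ 2 * ∑ i, fderiv ℝ (fun V => T V k i) (l • x) x * x i := by
    calc _ = ∑ i, ∑ j,
          fderiv ℝ (fun V => T V i j) (l • x) (Pi.single k 1) * (l * x i) * (l * x j) :=
          Finset.sum_congr rfl fun i _ => Finset.sum_congr rfl fun j _ => by ring
      _ = _ := by
          rw [hclosed, Finset.mul_sum]
          exact Finset.sum_congr rfl fun i _ => by ring
  have hsecond : ∑ i, ∑ j, T (l • x) i j * l * ((Pi.single k 1 : Fin N → ℝ) i * x j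
      + x i * (Pi.single k 1 : Fin N → ℝ) j) = 2 * l * ∑ i, T (l • x) k i * x i := by
    calc _ = l * ∑ i, ∑ j, T (l • x) i j * ((Pi.single k 1 : Fin N → ℝ) i * x j
          + x i * (Pi.single k 1 : Fin N → ℝ) j) := by
          simp only [Finset.mul_sum]
          exact Finset.sum_congr rfl fun i _ => Finset.sum_congr rfl fun j _ => by ring
      _ = _ := by rw [sum_sum_mul_single_add_mul_single (hTsymm (l • x))]; ring
  rw [Finset.sum_congr rfl fun i _ => Finset.sum_add_distrib, Finset.sum_add_distrib, hfirst,
    hsecond]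
  ring

end Radial

theorem stmt_3_general (N : ℕ)
    (T : (Fin N → ℝ) → Fin N → Fin N → ℝ)
    (hT : ∀ i j, ContDiff ℝ 1 fun V => T V i j)
    (hTsymm : ∀ V i j, T V i j = T V j i)
    (hweak : ∀ (V : Fin N → ℝ) (i j : Fin N),
      (∑ k, (fderiv ℝ (fun W => T W k j) V (Pi.single i 1)
        - fderiv ℝ (fun W => T W k i) V (Pi.single j 1)) * V k) = 0)
    (W : (Fin N → ℝ) → ℝ)
    (hW : ∀ x : Fin N → ℝ,
      W x = ∫ l in (0:ℝ)..1, ∑ i, ∑ j, T (l • x) i j * l * x i * x j) :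
    ∀ x : Fin N → ℝ, DifferentiableAt ℝ W x ∧
      ∀ k : Fin N, fderiv ℝ W x (Pi.single k 1) = ∑ i, T x k i * x i := by
  intro x
  have hG := contDiff_uncurry_radialIntegrand hT
  have hWx : HasFDerivAt W (∫ l in (0 : ℝ)..1, fderiv ℝ (radialIntegrand T · l) x) x := by
    rw [show W = _ from funext hW]
    exact hasFDerivAt_intervalIntegral_of_contDiff_uncurry hG 0 1 x
  refine ⟨hWx.differentiableAt, fun k => ?_⟩
  have hint : IntervalIntegrable (fun l => fderiv ℝ (radialIntegrand T · l) x) volume 0 1 :=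
    ((continuous_fderiv_left_of_contDiff_uncurry hG).comp
      (continuous_const.prodMk continuous_id)).intervalIntegrable 0 1
  rw [hWx.fderiv, ContinuousLinearMap.intervalIntegral_apply hint]
  simp only [fderiv_radialIntegrand_single (fun i j => (hT i j).differentiable one_ne_zero) hTsymm
    x _ (hweak _)]
  rw [intervalIntegral.integral_deriv_of_contDiffOn_Icc (contDiff_radialFlux hT x k).contDiffOn
    zero_le_one]
  simp [radialFlux]

/-- If `T` is continuously differentiable, symmetric, and satisfies the
weak closure condition `∑ k, (T_{kj,i} - T_{ki,j}) V_k = 0` everywhere, then the radial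
primitive `W x = ∫₀¹ ∑_{i,j} T (λx) i j * λ * x i * x j dλ` is differentiable with
`∂W/∂x_k (x) = ∑ i, T x k i * x i`. -/
theorem stmt_3 (N : ℕ) (hN : 1 ≤ N)
    (T : (Fin N → ℝ) → Fin N → Fin N → ℝ)
    (hT : ∀ i j, ContDiff ℝ 1 fun V => T V i j)
    (hTsymm : ∀ V i j, T V i j = T V j i)
    (hweak : ∀ (V : Fin N → ℝ) (i j : Fin N),
      (∑ k, (fderiv ℝ (fun W => T W k j) V (Pi.single i 1)
        - fderiv ℝ (fun W => T W k i) V (Pi.single j 1)) * V k) = 0)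
    (W : (Fin N → ℝ) → ℝ)
    (hW : ∀ x : Fin N → ℝ,
      W x = ∫ l in (0:ℝ)..1, ∑ i, ∑ j, T (l • x) i j * l * x i * x j) :
    ∀ x : Fin N → ℝ, DifferentiableAt ℝ W x ∧
      ∀ k : Fin N, fderiv ℝ W x (Pi.single k 1) = ∑ i, T x k i * x i :=
  stmt_3_general N T hT hTsymm hweak W hW
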